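/- A finite matroid M is binary if and only if for every circuit C of M and every cocircuit D of M the intersection C ∩ D has an even number of elements. -/

import Mathlib

/-- `ρ` is a representation of the matroid `M` over the field `K`. -/
def Matroid.IsRep {α : Type*} (M : Matroid α) (K : Type*) [Field K] {V : Type*}
    [AddCommGroup V] [Module K V] (ρ : α → V) : Prop :=
  (∀ S ⊆ M.E, (M.Indep S ↔ Set.InjOn ρ S ∧ LinearIndependent K ((↑) : (ρ '' S) → V))) ∧
    Submodule.span K (ρ '' M.E) = ⊤

/-- `M` is representable over the field `K`. -/
def Matroid.RepresentableOver {α : Type*} (M : Matroid α) (K : Type) [Field K] : Prop :=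
  ∃ (V : Type) (_ : AddCommGroup V) (_ : Module K V) (ρ : α → V), M.IsRep K ρ

/-- A matroid is binary if it admits a representation over `𝔽₂ = ZMod 2`. -/
def Matroid.IsBinary {α : Type*} (M : Matroid α) : Prop :=
  M.RepresentableOver (ZMod 2)

/-- A circuit of `M` is a minimal dependent set. -/
def Matroid.IsCircuit' {α : Type*} (M : Matroid α) (C : Set α) : Prop :=
  M.Dep C ∧ ∀ D, D ⊂ C → ¬ M.Dep D

/-!
If `ρ` represents `M` over `ZMod 2`, the vectors of a circuit `C` sum to zero, since its unique
linear dependency has all coefficients equal to `1`. For a cocircuit `K`, the complement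
`E \ K` is a hyperplane, so some functional vanishes on `ρ (E \ K)` and equals `1` on `ρ K`;
applied to the circuit sum it gives `|C ∩ K| = 0` in `ZMod 2`.

Conversely, send each element to its incidence vector in the cocircuits. A cocircuit meeting
an independent set `I` in a single element (a fundamental cocircuit) shows that the vectors of
`I` are independent, while the parity hypothesis says precisely that the vectors of every
circuit sum to zero.
-/

open Set Submodule

lemma Set.Finite.sum_indicator_one_eq_ncard_inter {α R : Type*} [AddCommMonoidWithOne R]
    {C : Set α} (hC : C.Finite) (K : Set α) :
    ∑ e ∈ hC.toFinset, K.indicator (1 : α → R) e = (C ∩ K).ncard := by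
  classical
  rw [Finset.sum_indicator_eq_sum_filter]
  simp only [Pi.one_apply, Finset.sum_const, nsmul_one]
  rw [← ncard_coe_finset, Finset.coe_filter]
  simp only [hC.mem_toFinset]
  rfl

namespace Matroid

variable {α : Type*} {M : Matroid α} {C I K X S : Set α} {e : α}

lemma isCircuit'_iff : M.IsCircuit' C ↔ M.IsCircuit C := by
  rw [IsCircuit', isCircuit_def, Set.minimal_iff_forall_ssubset]

lemma IsCocircuit.not_spanning_compl (hK : M.IsCocircuit K) : ¬ M.Spanning (M.E \ K) :=
  (isCocircuit_iff_minimal_compl_nonspanning.1 hK).prop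

lemma IsCocircuit.spanning_insert_compl (hK : M.IsCocircuit K) (he : e ∈ K) :
    M.Spanning (insert e (M.E \ K)) := by
  have h := (minimal_iff_forall_ssubset.1 (isCocircuit_iff_minimal_compl_nonspanning.1 hK)).2
    (sdiff_singleton_ssubset.2 he)
  rwa [not_not, Set.sdiff_sdiff_right, inter_singleton_of_mem (hK.subset_ground he),
    union_singleton] at h

lemma IsCocircuit.notMem_closure_compl (hK : M.IsCocircuit K) (he : e ∈ K) :
    e ∉ M.closure (M.E \ K) := by
  intro hcl
  apply hK.not_spanning_compl
  rw [← closure_spanning_iff, ← closure_insert_eq_of_mem_closure hcl,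
    closure_spanning_iff (insert_subset (hK.subset_ground he) sdiff_subset)]
  exact hK.spanning_insert_compl he

section Rep

variable {F : Type*} [Field F] {V : Type*} [AddCommGroup V] [Module F V] {ρ : α → V}

lemma isRep_iff : M.IsRep F ρ ↔
    (∀ S ⊆ M.E, M.Indep S ↔ LinearIndepOn F ρ S) ∧ span F (ρ '' M.E) = ⊤ := by
  refine and_congr_left fun _ ↦ forall₂_congr fun S _ ↦ ?_
  rw [LinearIndepOn_iff_linearIndepOn_image_injOn, and_comm]
  rfl

lemma IsRep.indep_iff (hρ : M.IsRep F ρ) (hS : S ⊆ M.E) : M.Indep S ↔ LinearIndepOn F ρ S :=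
  (isRep_iff.1 hρ).1 S hS

lemma IsRep.mem_span_iff_mem_closure_of_indep (hρ : M.IsRep F ρ) (hI : M.Indep I)
    (he : e ∈ M.E) : ρ e ∈ span F (ρ '' I) ↔ e ∈ M.closure I := by
  by_cases heI : e ∈ I
  · exact iff_of_true (subset_span (mem_image_of_mem ρ heI)) (M.mem_closure_of_mem heI)
  have h := hI.insert_indep_iff_of_notMem heI
  rw [hρ.indep_iff (insert_subset he hI.subset_ground), linearIndepOn_insert_iff,
    ← hρ.indep_iff hI.subset_ground] at h
  exact not_iff_not.1 (by simpa [hI, heI, he] using h)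

lemma IsRep.mem_span_iff_mem_closure (hρ : M.IsRep F ρ) (hX : X ⊆ M.E) (he : e ∈ M.E) :
    ρ e ∈ span F (ρ '' X) ↔ e ∈ M.closure X := by
  obtain ⟨I, hI⟩ := M.exists_isBasis X
  have hspan : span F (ρ '' X) = span F (ρ '' I) := by
    refine le_antisymm (span_le.2 ?_) (span_mono (image_mono hI.subset))
    rintro _ ⟨x, hx, rfl⟩
    exact (hρ.mem_span_iff_mem_closure_of_indep hI.indep (hX hx)).2 (hI.subset_closure hx)
  rw [hspan, hρ.mem_span_iff_mem_closure_of_indep hI.indep he, hI.closure_eq_closure]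

lemma IsRep.exists_dual_of_isCocircuit (hρ : M.IsRep F ρ) (hK : M.IsCocircuit K) :
    ∃ φ : V →ₗ[F] F, (∀ e ∈ M.E \ K, φ (ρ e) = 0) ∧ ∀ e ∈ K, φ (ρ e) ≠ 0 := by
  have hKE := hK.subset_ground
  obtain ⟨e₀, he₀⟩ := hK.nonempty
  obtain ⟨φ, hφe₀, hφ⟩ := exists_le_ker_of_notMem (p := span F (ρ '' (M.E \ K))) <|
    (hρ.mem_span_iff_mem_closure sdiff_subset (hKE he₀)).not.2 (hK.notMem_closure_compl he₀)
  have hφH : ∀ e ∈ M.E \ K, φ (ρ e) = 0 := fun e he ↦ hφ (subset_span (mem_image_of_mem ρ he))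
  refine ⟨φ, hφH, fun e he hφe ↦ hφe₀ ?_⟩
  have he₀cl : e₀ ∈ M.closure (insert e (M.E \ K)) := by
    rw [(hK.spanning_insert_compl he).closure_eq]
    exact hKE he₀
  have hle : span F (ρ '' insert e (M.E \ K)) ≤ LinearMap.ker φ := by
    rw [span_le]
    rintro _ ⟨f, hf | hf, rfl⟩
    exacts [hf ▸ hφe, hφH f hf]
  exact hle <|
    (hρ.mem_span_iff_mem_closure (insert_subset (hKE he) sdiff_subset) (hKE he₀)).2 he₀cl

lemma IsRep.exists_linearCombination_eq_zero_of_isCircuit (hρ : M.IsRep F ρ)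
    (hC : M.IsCircuit C) :
    ∃ c : α →₀ F, (c.support : Set α) = C ∧ Finsupp.linearCombination F ρ c = 0 := by
  obtain ⟨c, hcC, hc0, hne⟩ := linearDepOn_iff'.1 <|
    (hρ.indep_iff hC.subset_ground).not.1 hC.not_indep
  rw [Finsupp.mem_supported] at hcC
  refine ⟨c, hC.eq_of_not_indep_subset ?_ hcC, hc0⟩
  rw [hρ.indep_iff (hcC.trans hC.subset_ground), linearIndepOn_iff]
  exact fun h ↦ hne (h c ((Finsupp.mem_supported F c).2 subset_rfl) hc0)

end Rep

section BinaryRep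

variable {V : Type*} [AddCommGroup V] [Module (ZMod 2) V] {ρ : α → V}

lemma IsRep.sum_eq_zero_of_isCircuit (hρ : M.IsRep (ZMod 2) ρ) (hC : M.IsCircuit C)
    (hCfin : C.Finite) : ∑ e ∈ hCfin.toFinset, ρ e = 0 := by
  obtain ⟨c, hcC, hc0⟩ := hρ.exists_linearCombination_eq_zero_of_isCircuit hC
  have hc : hCfin.toFinset = c.support := by rw [← Finset.coe_inj, hcC, hCfin.coe_toFinset]
  rw [Finsupp.linearCombination_apply, Finsupp.sum] at hc0
  rw [hc, ← hc0]
  refine Finset.sum_congr rfl fun e he ↦ ?_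
  have hce : c e = 1 := Fin.eq_one_of_ne_zero _ (Finsupp.mem_support_iff.1 he)
  rw [hce, one_smul]

theorem IsRep.even_ncard_inter [M.Finite] (hρ : M.IsRep (ZMod 2) ρ) (hC : M.IsCircuit C)
    (hK : M.IsCocircuit K) : Even (C ∩ K).ncard := by
  obtain ⟨φ, hφH, hφK⟩ := hρ.exists_dual_of_isCocircuit hK
  have hCfin := hC.finite
  have hφ : ∀ e ∈ hCfin.toFinset, φ (ρ e) = K.indicator 1 e := fun e he ↦ by
    by_cases heK : e ∈ K
    · rw [indicator_of_mem heK]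
      exact Fin.eq_one_of_ne_zero _ (hφK e heK)
    · rw [indicator_of_notMem heK]
      exact hφH e ⟨hC.subset_ground (hCfin.mem_toFinset.1 he), heK⟩
  rw [← ZMod.natCast_eq_zero_iff_even, ← hCfin.sum_indicator_one_eq_ncard_inter,
    ← Finset.sum_congr rfl hφ, ← map_sum, hρ.sum_eq_zero_of_isCircuit hC hCfin, map_zero]

end BinaryRep

noncomputable def cocircuitIncidence (M : Matroid α) (e : α) : {K // M.IsCocircuit K} → ZMod 2 :=
  fun K ↦ K.1.indicator 1 e

lemma Indep.linearIndepOn_cocircuitIncidence (hI : M.Indep I) :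
    LinearIndepOn (ZMod 2) M.cocircuitIncidence I := by
  rw [linearIndepOn_iff]
  intro c hcI hc0
  rw [Finsupp.mem_supported] at hcI
  rw [← Finsupp.support_eq_empty, Finset.eq_empty_iff_forall_notMem]
  intro e he
  obtain ⟨K, hK, hKI⟩ := hI.exists_isCocircuit_inter_eq_mem (hcI he)
  have hsum := congrFun hc0 ⟨K, hK⟩
  rw [Finsupp.linearCombination_apply, Finsupp.sum, Finset.sum_apply,
    Finset.sum_eq_single_of_mem e he] at hsum
  · simp [cocircuitIncidence, (hKI.symm.subset rfl).1, Finsupp.mem_support_iff.1 he] at hsum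
  · intro f hf hfe
    have hfK : f ∉ K := fun hfK ↦ hfe (hKI.subset ⟨hfK, hcI hf⟩)
    simp [cocircuitIncidence, hfK]

lemma sum_cocircuitIncidence_eq_zero (hC : C.Finite)
    (hCK : ∀ K : {K // M.IsCocircuit K}, Even (C ∩ K).ncard) :
    ∑ e ∈ hC.toFinset, M.cocircuitIncidence e = 0 := by
  funext K
  rw [Finset.sum_apply]
  exact (hC.sum_indicator_one_eq_ncard_inter K.1).trans (ZMod.natCast_eq_zero_iff_even.2 (hCK K))

lemma indep_iff_linearIndepOn_cocircuitIncidence [M.Finite]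
    (h : ∀ C K, M.IsCircuit C → M.IsCocircuit K → Even (C ∩ K).ncard) (hS : S ⊆ M.E) :
    M.Indep S ↔ LinearIndepOn (ZMod 2) M.cocircuitIncidence S := by
  refine ⟨Indep.linearIndepOn_cocircuitIncidence, fun hS' ↦ by_contra fun hSdep ↦ ?_⟩
  obtain ⟨C, hCS, hC⟩ := ((not_indep_iff hS).1 hSdep).exists_isCircuit_subset
  have hCfin := hC.finite
  obtain ⟨e, he⟩ := hC.nonempty
  have hCli := linearIndepOn_finset_iff.1 (hS'.mono (hCfin.coe_toFinset.trans_subset hCS)) 1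
    (by simpa using sum_cocircuitIncidence_eq_zero hCfin fun K ↦ h C K hC K.2)
  exact one_ne_zero (hCli e (hCfin.mem_toFinset.2 he))

lemma representableOver_of_forall_indep_iff [M.Finite] {F : Type} [Field F] {W : Type*}
    [AddCommGroup W] [Module F W] (v : α → W)
    (hv : ∀ S ⊆ M.E, M.Indep S ↔ LinearIndepOn F v S) : M.RepresentableOver F := by
  classical
  -- `RepresentableOver` asks for a space in `Type`, so we pass to coordinates `Fin n → F`.
  let U := span F (v '' M.E)
  have : Module.Finite F U := Module.Finite.span_of_finite F (M.ground_finite.image v)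
  let ψ := (Module.finBasis F U).equivFun
  let w : α → U := fun e ↦ if he : e ∈ M.E then ⟨v e, subset_span (mem_image_of_mem v he)⟩ else 0
  have hw : EqOn (U.subtype ∘ w) v M.E := fun e he ↦ by simp [w, he]
  have hwspan : span F (w '' M.E) = ⊤ := by
    refine map_injective_of_injective U.injective_subtype ?_
    rw [map_span, Submodule.map_top, range_subtype, ← image_comp, hw.image_eq]
  refine ⟨_, _, _, ψ ∘ w, isRep_iff.2 ⟨fun S hS ↦ ?_, ?_⟩⟩
  · rw [hv S hS, ← linearIndepOn_congr (hw.mono hS),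
      U.subtype.linearIndepOn_iff_of_injOn U.injective_subtype.injOn]
    exact (ψ.toLinearMap.linearIndepOn_iff_of_injOn ψ.injective.injOn).symm
  · rw [image_comp, ← LinearEquiv.coe_toLinearMap, ← map_span, hwspan, Submodule.map_top,
      LinearEquiv.range]

end Matroid

open Matroid

/-- A finite matroid is binary if and only if the intersection of every circuit with every
cocircuit (circuit of the dual matroid) has an even number of elements. -/
theorem binary_iff_circuit_cocircuit_inter_even {α : Type*} (M : Matroid α) [M.Finite] :
    M.IsBinary ↔
      ∀ C D, M.IsCircuit' C → M✶.IsCircuit' D → Even (C ∩ D).ncard := by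
  simp only [isCircuit'_iff]
  refine ⟨fun ⟨V, _, _, ρ, hρ⟩ C K hC hK ↦ hρ.even_ncard_inter hC hK, fun h ↦ ?_⟩
  exact representableOver_of_forall_indep_iff M.cocircuitIncidence fun S hS ↦
    indep_iff_linearIndepOn_cocircuitIncidence h hS
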